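/- arXiv:1411.7729 — 3 statements merged into one kernel-verified Lean document; each statement's English description precedes it below -/
import Mathlib

section
/- Let B_w be a unilateral weighted backward shift on X = c₀(ℤ₊) or ℓ^p(ℤ₊), 1 ≤ p < ∞, with bounded weight w = (w_n)_{n≥1}. Then B_w is topologically multiply recurrent if and only if for every M > 0 there exists m₀ such that for every m > m₀ there exists n ∈ ℕ with min_{1 ≤ l ≤ m} |w_1 w_2 ⋯ w_{ln}| > M. -/
open Filter Topology
open scoped ENNReal

noncomputable def blockCount (A : Set ℕ) (k s : ℕ) : ℕ :=
  Nat.card (A ∩ Set.Icc (k + 1) (k + s) : Set ℕ)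

/-- upper Banach density -/
noncomputable def upperBanachDensity (A : Set ℕ) : ℝ :=
  Filter.limsup (fun s : ℕ =>
    (Filter.limsup (fun k : ℕ => (blockCount A k s : ℝ)) Filter.atTop) / s) Filter.atTop

/-- lower Banach density -/
noncomputable def lowerBanachDensity (A : Set ℕ) : ℝ :=
  Filter.liminf (fun s : ℕ =>
    (Filter.liminf (fun k : ℕ => (blockCount A k s : ℝ)) Filter.atTop) / s) Filter.atTop

/-- the family `BD̄` of sets of positive upper Banach density -/
def upperBD (A : Set ℕ) : Prop := 0 < upperBanachDensity A

/-- the family `BD₁` of sets of lower Banach density one -/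
def BDone (A : Set ℕ) : Prop := lowerBanachDensity A = 1

/-- essential idempotent ultrafilter -/
def IsEssentialIdempotent (p : Ultrafilter ℕ) : Prop :=
  (∀ A : Set ℕ, A ∈ p ↔ {n : ℕ | {m : ℕ | n + m ∈ A} ∈ p} ∈ p) ∧
    ∀ A ∈ p, 0 < upperBanachDensity A

/-- membership in `𝒟*`, the intersection of all essential idempotents -/
def InDstar (A : Set ℕ) : Prop :=
  ∀ p : Ultrafilter ℕ, IsEssentialIdempotent p → A ∈ p

/-- limit of a real sequence along a family of subsets of ℕ -/
def FamilyLim (F : Set ℕ → Prop) (x : ℕ → ℝ) (y : ℝ) : Prop :=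
  ∀ V : Set ℝ, IsOpen V → y ∈ V → F {n | x n ∈ V}

/-- property `P_𝓕` for a sequence of maps -/
def SatisfiesP {X : Type*} [TopologicalSpace X] (T : ℕ → X → X) (F : Set ℕ → Prop) : Prop :=
  ∀ U : Set X, IsOpen U → U.Nonempty → ∃ x : X, F {n | T n x ∈ U}

/-- topological 𝒟-recurrence with respect to a sequence of scalars -/
def TopDRecurrentWrt {X : Type*} [NormedAddCommGroup X] [NormedSpace ℂ X]
    (T : X →L[ℂ] X) (l : ℕ → ℂ) : Prop :=
  ∃ p : Ultrafilter ℕ, IsEssentialIdempotent p ∧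
    ∀ U : Set X, IsOpen U → U.Nonempty → ∃ x : X, ∀ r : ℕ,
      {k : ℕ | 0 < upperBanachDensity
        {a : ℕ | ∀ j ≤ r, (T ^ (j * k)) (l a • (T ^ a) x) ∈ U}} ∈ p

/-- topological 𝒟-recurrence -/
def TopDRecurrent {X : Type*} [NormedAddCommGroup X] [NormedSpace ℂ X]
    (T : X →L[ℂ] X) : Prop :=
  TopDRecurrentWrt T fun _ => 1

/-- reiterative hypercyclicity for a sequence of maps -/
def ReiterativelyHypercyclicSeq {X : Type*} [TopologicalSpace X] (T : ℕ → X → X) : Prop :=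
  ∃ x : X, ∀ U : Set X, IsOpen U → U.Nonempty → 0 < upperBanachDensity {n | T n x ∈ U}

/-- 𝒟-reiterative hypercyclicity with respect to a sequence of scalars -/
def DReiterativelyHypercyclicWrt {X : Type*} [NormedAddCommGroup X] [NormedSpace ℂ X]
    (T : X →L[ℂ] X) (l : ℕ → ℂ) : Prop :=
  ∃ p : Ultrafilter ℕ, IsEssentialIdempotent p ∧ ∃ x : X,
    ∀ U : Set X, IsOpen U → U.Nonempty → ∀ r : ℕ,
      {k : ℕ | 0 < upperBanachDensity
        {a : ℕ | ∀ j ≤ r, (T ^ (j * k)) (l a • (T ^ a) x) ∈ U}} ∈ p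

/-- hypercyclic operator -/
def Hypercyclic {X : Type*} [NormedAddCommGroup X] [NormedSpace ℂ X] (T : X →L[ℂ] X) : Prop :=
  ∃ x : X, Dense (Set.range fun n : ℕ => (T ^ n) x)

/-- topological multiple recurrence -/
def TopMultiplyRecurrent {X : Type*} [NormedAddCommGroup X] [NormedSpace ℂ X]
    (T : X →L[ℂ] X) : Prop :=
  ∀ U : Set X, IsOpen U → U.Nonempty → ∀ r : ℕ, ∃ k : ℕ, 0 < k ∧
    ∃ x : X, ∀ j ≤ r, (T ^ (j * k)) x ∈ U

/-- `𝓕`-operator -/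
def FOperator {X : Type*} [NormedAddCommGroup X] [NormedSpace ℂ X]
    (F : Set ℕ → Prop) (T : X →L[ℂ] X) : Prop :=
  ∀ U V : Set X, IsOpen U → IsOpen V → U.Nonempty → V.Nonempty →
    F {n : ℕ | ∃ x ∈ U, (T ^ n) x ∈ V}

/-- mixing operator -/
def MixingOp {X : Type*} [NormedAddCommGroup X] [NormedSpace ℂ X]
    (T : X →L[ℂ] X) : Prop :=
  ∀ U V : Set X, IsOpen U → IsOpen V → U.Nonempty → V.Nonempty →
    {n : ℕ | ∃ x ∈ U, (T ^ n) x ∈ V} ∈ Filter.cofinite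

/-- recurrent operator -/
def RecurrentOp {X : Type*} [NormedAddCommGroup X] [NormedSpace ℂ X]
    (T : X →L[ℂ] X) : Prop :=
  ∀ U : Set X, IsOpen U → U.Nonempty →
    ∃ n : ℕ, 0 < n ∧ (U ∩ (fun x => (T ^ n) x) ⁻¹' U).Nonempty

/-- syndetic set -/
def Syndetic (A : Set ℕ) : Prop :=
  ∃ k : ℕ, 0 < k ∧ ∀ n : ℕ, ∃ i : ℕ, 1 ≤ i ∧ i ≤ k ∧ n + i ∈ A

/-- upper (asymptotic) density -/
noncomputable def upperDensity (A : Set ℕ) : ℝ :=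
  Filter.limsup (fun n : ℕ => (Nat.card (A ∩ Set.Icc 1 n : Set ℕ) : ℝ) / n) Filter.atTop

/-- bounded weight -/
def BddWeight {ι : Type*} (w : ι → ℂ) : Prop := ∃ C : ℝ, ∀ i, ‖w i‖ ≤ C

/-- unilateral weighted backward shift relative to a basis `e` -/
def IsUnilateralWeightedShift {X : Type*} [NormedAddCommGroup X] [NormedSpace ℂ X]
    (e : ℕ → X) (w : ℕ → ℂ) (B : X →L[ℂ] X) : Prop :=
  B (e 0) = 0 ∧ ∀ n : ℕ, B (e (n + 1)) = w (n + 1) • e n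

/-- bilateral weighted backward shift relative to a basis `e` -/
def IsBilateralWeightedShift {X : Type*} [NormedAddCommGroup X] [NormedSpace ℂ X]
    (e : ℤ → X) (w : ℤ → ℂ) (B : X →L[ℂ] X) : Prop :=
  ∀ k : ℤ, B (e k) = w k • e (k - 1)

/-- `B ⊕ B² ⊕ ⋯ ⊕ B^r` acting on `X^r` -/
noncomputable def directSumPow {X : Type*} [NormedAddCommGroup X] [NormedSpace ℂ X]
    (T : X →L[ℂ] X) (r : ℕ) : (Fin r → X) →L[ℂ] (Fin r → X) :=
  ContinuousLinearMap.pi fun i => (T ^ ((i : ℕ) + 1)).comp (ContinuousLinearMap.proj i)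

/-- canonical basis vector of `c₀` over a discrete index type -/
noncomputable def c0Single {α : Type*} [TopologicalSpace α] [DiscreteTopology α]
    [DecidableEq α] (k : α) : ZeroAtInftyContinuousMap α ℂ where
  toFun := fun m => if m = k then 1 else 0
  continuous_toFun := continuous_of_discreteTopology
  zero_at_infty' := by
    rw [Filter.cocompact_eq_cofinite]
    refine Filter.Tendsto.congr' ?_ tendsto_const_nhds
    filter_upwards [Filter.eventually_cofinite_ne k] with m hm
    simp [hm]

/-- the set `A_{M;j}` for a bilateral weight -/
def AMjZ (w : ℤ → ℂ) (M : ℝ) (j : ℤ) : Set ℕ :=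
  {n : ℕ | M < ∏ i ∈ Finset.Icc (j + 1) (j + (n : ℤ)), ‖w i‖}

/-- the set `Ā_{M;j}` for a bilateral weight -/
def AbarMjZ (w : ℤ → ℂ) (M : ℝ) (j : ℤ) : Set ℕ :=
  {n : ℕ | ∏ i ∈ Finset.Icc (j - (n : ℤ) + 1) j, ‖w i‖ < 1 / M}

/-- the set `A_{M;j}` for a unilateral weight -/
def AMjN (w : ℕ → ℂ) (M : ℝ) (j : ℕ) : Set ℕ :=
  {n : ℕ | M < ∏ i ∈ Finset.Icc (j + 1) (j + n), ‖w i‖}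

/-!
Write `P N = ‖w 1 ⋯ w N‖`. The `0`-th coordinate of `B ^ N x` is `w 1 ⋯ w N` times the `N`-th
coordinate of `x`; so if `x` and `B ^ (l k) x` are both `ε`-close to `e 0`, then
`P (l k) > (1 - ε) / ε`.

Conversely, a vector `∑_{s ≤ q} c s • e s` of the open set is approximated by
`∑_s c s • ∑_{j ≤ r} (w (s+1) ⋯ w (s+j k))⁻¹ • e (s + j k)` with `k > q`; the operator `B ^ (J k)`
turns each inner sum into the same sum over `j ≤ r - J`, whose terms with `j ≥ 1` are small once
all the products `‖w (s+1) ⋯ w (s+j k)‖` are large. As the weights are bounded, these products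
are large when `P` is large at the multiples `2 j (q + 1) n` of `n` and `k = (q + 1) (2 n - 1)`.
-/

open Finset

section WeightProducts

variable {a : ℕ → ℝ} {C : ℝ}

theorem prod_Ioc_le_pow_sub (ha0 : ∀ i, 0 ≤ a i) (haC : ∀ i, a i ≤ C) (s t : ℕ) :
    ∏ i ∈ Ioc s t, a i ≤ C ^ (t - s) :=
  calc ∏ i ∈ Ioc s t, a i ≤ ∏ _i ∈ Ioc s t, C := prod_le_prod (fun i _ => ha0 i) fun i _ => haC i
    _ = C ^ (t - s) := by rw [prod_const, Nat.card_Ioc]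

theorem prod_Ioc_zero_le_pow_mul_prod_Ioc (ha0 : ∀ i, 0 ≤ a i) (haC : ∀ i, a i ≤ C) (hC : 1 ≤ C)
    {s t u D : ℕ} (hst : s ≤ t) (htu : t ≤ u) (hD : s + (u - t) ≤ D) :
    ∏ i ∈ Ioc 0 u, a i ≤ C ^ D * ∏ i ∈ Ioc s t, a i := by
  have hmid : 0 ≤ ∏ i ∈ Ioc s t, a i := prod_nonneg fun i _ => ha0 i
  rw [← prod_Ioc_consecutive _ (Nat.zero_le s) (hst.trans htu), ← prod_Ioc_consecutive _ hst htu]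
  calc (∏ i ∈ Ioc 0 s, a i) * ((∏ i ∈ Ioc s t, a i) * ∏ i ∈ Ioc t u, a i)
      ≤ C ^ (s - 0) * ((∏ i ∈ Ioc s t, a i) * C ^ (u - t)) := by
        gcongr
        · exact mul_nonneg hmid (prod_nonneg fun i _ => ha0 i)
        · exact prod_Ioc_le_pow_sub ha0 haC 0 s
        · exact prod_Ioc_le_pow_sub ha0 haC t u
    _ = C ^ (s + (u - t)) * ∏ i ∈ Ioc s t, a i := by rw [Nat.sub_zero, pow_add]; ring
    _ ≤ C ^ D * ∏ i ∈ Ioc s t, a i := by gcongr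

theorem exists_forall_lt_prod_Ioc (ha0 : ∀ i, 0 ≤ a i) (haC : ∀ i, a i ≤ C) (hC : 1 ≤ C)
    (H : ∀ M > (0 : ℝ), ∀ m : ℕ, ∃ n : ℕ, 0 < n ∧
      ∀ l : ℕ, 1 ≤ l → l ≤ m → M < ∏ i ∈ Icc 1 (l * n), a i)
    (q r : ℕ) {M : ℝ} (hM : 0 < M) :
    ∃ k > q, ∀ j, 1 ≤ j → j ≤ r → ∀ s ≤ q, M < ∏ i ∈ Ioc s (s + j * k), a i := by
  obtain ⟨n, hn, hlarge⟩ := H (M * C ^ (r * (q + 1))) (by positivity) (2 * r * (q + 1))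
  obtain ⟨n, rfl⟩ : ∃ n', n = n' + 1 := ⟨n - 1, by omega⟩
  refine ⟨(q + 1) * (2 * n + 1), by nlinarith, fun j hj1 hjr s hs => ?_⟩
  -- `s + j k` lies `j (q + 1) - s` below the multiple `2 j (q + 1) (n + 1)` of `n + 1`
  obtain ⟨g, hg⟩ : ∃ g, g + s = j * (q + 1) := ⟨j * (q + 1) - s, Nat.sub_add_cancel (by nlinarith)⟩
  have hu : 2 * j * (q + 1) * (n + 1) = s + j * ((q + 1) * (2 * n + 1)) + g := by nlinarith
  have hbound := prod_Ioc_zero_le_pow_mul_prod_Ioc ha0 haC hC (D := r * (q + 1))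
    (Nat.le_add_right s _) (hu ▸ Nat.le_add_right _ g)
    (by rw [hu, Nat.add_sub_cancel_left]; nlinarith)
  have hl := hlarge (2 * j * (q + 1)) (by nlinarith) (by nlinarith)
  rw [← Icc_add_one_left_eq_Ioc, zero_add] at hbound
  exact lt_of_mul_lt_mul_left (by linarith) (pow_nonneg (by linarith) _)

end WeightProducts

section WeightedShift

variable {X : Type*} [NormedAddCommGroup X] [NormedSpace ℂ X] {e : ℕ → X} {w : ℕ → ℂ}
  {B : X →L[ℂ] X}

namespace IsUnilateralWeightedShift

theorem pow_apply_add (hB : IsUnilateralWeightedShift e w B) (u N : ℕ) :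
    (B ^ N) (e (u + N)) = (∏ i ∈ Ioc u (u + N), w i) • e u := by
  induction N with
  | zero => simp
  | succ N ih =>
    rw [pow_succ, mul_apply_eq_comp, ← add_assoc, hB.2, map_smul, ih, smul_smul,
      prod_Ioc_succ_top (Nat.le_add_right u N), mul_comm]

theorem pow_apply_of_lt (hB : IsUnilateralWeightedShift e w B) {t N : ℕ} (h : t < N) :
    (B ^ N) (e t) = 0 := by
  obtain ⟨d, rfl⟩ := Nat.exists_eq_add_of_lt h
  have hBt := hB.pow_apply_add 0 t
  rw [zero_add] at hBt
  rw [show t + d + 1 = d + (t + 1) by omega, pow_add, mul_apply_eq_comp, pow_succ',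
    mul_apply_eq_comp, hBt, map_smul, hB.1, smul_zero, map_zero]

theorem coord_zero_pow_apply (hB : IsUnilateralWeightedShift e w B) {f : ℕ → X →L[ℂ] ℂ}
    (hfe : ∀ n m, f n (e m) = if n = m then 1 else 0)
    (hdense : Dense (Submodule.span ℂ (Set.range e) : Set X)) (N : ℕ) (x : X) :
    f 0 ((B ^ N) x) = (∏ i ∈ Ioc 0 N, w i) * f N x := by
  suffices (f 0).comp (B ^ N) = (∏ i ∈ Ioc 0 N, w i) • f N from congr($this x)
  refine ContinuousLinearMap.ext_on hdense ?_
  rintro _ ⟨t, rfl⟩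
  rcases lt_or_ge t N with h | h
  · rw [ContinuousLinearMap.comp_apply, hB.pow_apply_of_lt h, map_zero,
      smul_apply, hfe, if_neg h.ne', smul_zero]
  · obtain ⟨u, rfl⟩ := Nat.exists_eq_add_of_le' h
    rw [ContinuousLinearMap.comp_apply, hB.pow_apply_add, map_smul, smul_apply,
      hfe, hfe]
    rcases Nat.eq_zero_or_pos u with rfl | hu
    · simp
    · rw [if_neg hu.ne, if_neg (by omega), smul_zero, smul_zero]

theorem one_sub_lt_prod_mul (hB : IsUnilateralWeightedShift e w B) {f : ℕ → X →L[ℂ] ℂ}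
    (hfe : ∀ n m, f n (e m) = if n = m then 1 else 0) (hf : ∀ n x, ‖f n x‖ ≤ ‖x‖)
    (hdense : Dense (Submodule.span ℂ (Set.range e) : Set X)) {x : X} {N : ℕ} (hN : 0 < N)
    {ε : ℝ} (hx : ‖x - e 0‖ < ε) (hBx : ‖(B ^ N) x - e 0‖ < ε) :
    1 - ε < (∏ i ∈ Ioc 0 N, ‖w i‖) * ε := by
  have hfN : ‖f N x‖ < ε := by
    calc ‖f N x‖ = ‖f N (x - e 0)‖ := by rw [map_sub, hfe, if_neg hN.ne', sub_zero]
      _ < ε := (hf _ _).trans_lt hx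
  have hf0 : ‖f 0 ((B ^ N) x) - 1‖ < ε := by
    calc ‖f 0 ((B ^ N) x) - 1‖ = ‖f 0 ((B ^ N) x - e 0)‖ := by rw [map_sub, hfe, if_pos rfl]
      _ < ε := (hf _ _).trans_lt hBx
  calc 1 - ε < ‖f 0 ((B ^ N) x)‖ := by
        have := norm_sub_norm_le (1 : ℂ) (f 0 ((B ^ N) x))
        rw [norm_one, norm_sub_rev] at this
        linarith
    _ = (∏ i ∈ Ioc 0 N, ‖w i‖) * ‖f N x‖ := by
        rw [hB.coord_zero_pow_apply hfe hdense, norm_mul, norm_prod]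
    _ ≤ (∏ i ∈ Ioc 0 N, ‖w i‖) * ε := by gcongr

theorem forall_lt_prod_of_topMultiplyRecurrent (hB : IsUnilateralWeightedShift e w B)
    {f : ℕ → X →L[ℂ] ℂ} (hfe : ∀ n m, f n (e m) = if n = m then 1 else 0)
    (hf : ∀ n x, ‖f n x‖ ≤ ‖x‖) (hdense : Dense (Submodule.span ℂ (Set.range e) : Set X))
    (hrec : TopMultiplyRecurrent B) {M : ℝ} (hM : 0 < M) (m : ℕ) :
    ∃ n : ℕ, 0 < n ∧ ∀ l : ℕ, 1 ≤ l → l ≤ m → M < ∏ i ∈ Icc 1 (l * n), ‖w i‖ := by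
  set ε := 1 / (M + 2)
  have hε : 0 < ε := by positivity
  have hεM : (M + 2) * ε = 1 := mul_one_div_cancel (by positivity)
  obtain ⟨k, hk, x, hx⟩ := hrec (Metric.ball (e 0) ε) Metric.isOpen_ball
    ⟨e 0, Metric.mem_ball_self hε⟩ m
  refine ⟨k, hk, fun l hl1 hlm => ?_⟩
  have hx0 := hx 0 (Nat.zero_le m)
  rw [zero_mul, pow_zero, one_apply_eq_self, Metric.mem_ball, dist_eq_norm] at hx0
  have hxl := hx l hlm
  rw [Metric.mem_ball, dist_eq_norm] at hxl
  have := hB.one_sub_lt_prod_mul hfe hf hdense (Nat.mul_pos hl1 hk) hx0 hxl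
  rw [← Icc_add_one_left_eq_Ioc, zero_add] at this
  nlinarith

theorem pow_sub_apply_inv_prod_smul (hB : IsUnilateralWeightedShift e w B) (hw : ∀ n, w n ≠ 0)
    {s a b : ℕ} (hsa : s ≤ a) (hab : a ≤ b) :
    (B ^ (b - a)) ((∏ i ∈ Ioc s b, w i)⁻¹ • e b) = (∏ i ∈ Ioc s a, w i)⁻¹ • e a := by
  obtain ⟨d, rfl⟩ := Nat.exists_eq_add_of_le hab
  rw [Nat.add_sub_cancel_left, map_smul, hB.pow_apply_add, smul_smul,
    ← prod_Ioc_consecutive _ hsa (Nat.le_add_right a d), mul_inv, mul_assoc,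
    inv_mul_cancel₀ (prod_ne_zero_iff.2 fun i _ => hw i), mul_one]

end IsUnilateralWeightedShift

/-- If `B` is the weighted shift with weights `w`, then `B ^ (j * k)` maps the `j`-th summand
to `e s`. -/
noncomputable def preimageSum (e : ℕ → X) (w : ℕ → ℂ) (s k r : ℕ) : X :=
  ∑ j ∈ range (r + 1), (∏ i ∈ Ioc s (s + j * k), w i)⁻¹ • e (s + j * k)

theorem norm_preimageSum_sub_le (he : ∀ n, ‖e n‖ ≤ 1) {s k r : ℕ} {K : ℝ} (hK : 0 < K)
    (hlarge : ∀ j, 1 ≤ j → j ≤ r → K < ∏ i ∈ Ioc s (s + j * k), ‖w i‖) :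
    ‖preimageSum e w s k r - e s‖ ≤ r / K := by
  rw [preimageSum, sum_range_succ', zero_mul, add_zero, Ioc_self, prod_empty, inv_one, one_smul,
    add_sub_cancel_right]
  calc ‖∑ j ∈ range r, (∏ i ∈ Ioc s (s + (j + 1) * k), w i)⁻¹ • e (s + (j + 1) * k)‖
      ≤ ∑ _j ∈ range r, K⁻¹ := norm_sum_le_of_le _ fun j hj => ?_
    _ = r / K := by rw [sum_const, card_range, nsmul_eq_mul, div_eq_mul_inv]
  have hK_lt := hlarge (j + 1) (by omega) (by rw [mem_range] at hj; omega)
  rw [norm_smul, norm_inv, norm_prod]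
  calc (∏ i ∈ Ioc s (s + (j + 1) * k), ‖w i‖)⁻¹ * ‖e (s + (j + 1) * k)‖
      ≤ (∏ i ∈ Ioc s (s + (j + 1) * k), ‖w i‖)⁻¹ * 1 := by gcongr; exact he _
    _ ≤ K⁻¹ := by rw [mul_one]; exact inv_anti₀ hK hK_lt.le

namespace IsUnilateralWeightedShift

theorem pow_mul_apply_preimageSum (hB : IsUnilateralWeightedShift e w B) (hw : ∀ n, w n ≠ 0)
    {s k J r : ℕ} (hsk : s < k) (hJ : J ≤ r) :
    (B ^ (J * k)) (preimageSum e w s k r) = preimageSum e w s k (r - J) := by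
  rw [preimageSum, preimageSum, map_sum, ← sum_range_add_sum_Ico _ (show J ≤ r + 1 by omega),
    sum_Ico_eq_sum_range, show r + 1 - J = r - J + 1 by omega, sum_eq_zero fun j hj => ?_, zero_add]
  · refine sum_congr rfl fun i _ => ?_
    have hJk : J * k = s + (J + i) * k - (s + i * k) := by rw [add_mul]; omega
    rw [hJk, hB.pow_sub_apply_inv_prod_smul hw (Nat.le_add_right s _) (by nlinarith)]
  · rw [map_smul, hB.pow_apply_of_lt, smul_zero]
    nlinarith [mem_range.1 hj]

theorem topMultiplyRecurrent_of_forall_lt_prod (hB : IsUnilateralWeightedShift e w B)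
    (he : ∀ n, ‖e n‖ ≤ 1) (hdense : Dense (Submodule.span ℂ (Set.range e) : Set X))
    (hw : ∀ n, w n ≠ 0) (hwb : BddWeight w)
    (H : ∀ M > (0 : ℝ), ∀ m : ℕ, ∃ n : ℕ, 0 < n ∧
      ∀ l : ℕ, 1 ≤ l → l ≤ m → M < ∏ i ∈ Icc 1 (l * n), ‖w i‖) :
    TopMultiplyRecurrent B := by
  intro U hU hUne r
  obtain ⟨C, hC⟩ := hwb
  obtain ⟨x₀, hx₀span, hx₀U⟩ := hdense.exists_mem_open hU hUne
  obtain ⟨ε, hε, hball⟩ := Metric.isOpen_iff.1 hU x₀ hx₀U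
  obtain ⟨c, rfl⟩ := Finsupp.mem_span_range_iff_exists_finsupp.1 hx₀span
  set S := ∑ s ∈ c.support, ‖c s‖
  set K := (S * r + 1) / ε
  have hS : 0 ≤ S := sum_nonneg fun s _ => norm_nonneg _
  have hK : 0 < K := by positivity
  obtain ⟨k, hkq, hk⟩ := exists_forall_lt_prod_Ioc (fun i => norm_nonneg (w i))
    (fun i => (hC i).trans (le_max_left C 1)) (le_max_right C 1) H (c.support.sup id) r hK
  have hsk : ∀ s ∈ c.support, s < k := fun s hs => (le_sup (f := id) hs).trans_lt hkq
  refine ⟨k, by omega, ∑ s ∈ c.support, c s • preimageSum e w s k r, fun J hJ => hball ?_⟩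
  rw [Metric.mem_ball, dist_eq_norm, Finsupp.sum, map_sum, ← sum_sub_distrib]
  calc ‖∑ s ∈ c.support, ((B ^ (J * k)) (c s • preimageSum e w s k r) - c s • e s)‖
      ≤ ∑ s ∈ c.support, ‖c s‖ * (r / K) := by
        refine norm_sum_le_of_le _ fun s hs => ?_
        rw [map_smul, hB.pow_mul_apply_preimageSum hw (hsk s hs) hJ, ← smul_sub, norm_smul]
        gcongr
        refine (norm_preimageSum_sub_le he hK fun j hj1 hj => ?_).trans (by gcongr; omega)
        exact hk j hj1 (by omega) s (le_sup (f := id) hs)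
    _ = S * r / K := by rw [← sum_mul]; ring
    _ < ε := by
        rw [div_lt_iff₀ hK, mul_div_cancel₀ _ hε.ne']
        linarith

theorem topMultiplyRecurrent_iff (hB : IsUnilateralWeightedShift e w B) (he : ∀ n, ‖e n‖ ≤ 1)
    {f : ℕ → X →L[ℂ] ℂ} (hfe : ∀ n m, f n (e m) = if n = m then 1 else 0)
    (hf : ∀ n x, ‖f n x‖ ≤ ‖x‖) (hdense : Dense (Submodule.span ℂ (Set.range e) : Set X))
    (hw : ∀ n, w n ≠ 0) (hwb : BddWeight w) :
    TopMultiplyRecurrent B ↔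
      ∀ M > (0 : ℝ), ∃ m₀ : ℕ, ∀ m > m₀, ∃ n : ℕ, 0 < n ∧
        ∀ l : ℕ, 1 ≤ l → l ≤ m → M < ∏ i ∈ Icc 1 (l * n), ‖w i‖ := by
  refine ⟨fun hrec M hM => ⟨0, fun m _ =>
    hB.forall_lt_prod_of_topMultiplyRecurrent hfe hf hdense hrec hM m⟩, fun H => ?_⟩
  refine hB.topMultiplyRecurrent_of_forall_lt_prod he hdense hw hwb fun M hM m => ?_
  obtain ⟨m₀, hm₀⟩ := H M hM
  obtain ⟨n, hn, hlarge⟩ := hm₀ (max m (m₀ + 1)) (by omega)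
  exact ⟨n, hn, fun l hl1 hlm => hlarge l hl1 (hlm.trans (le_max_left _ _))⟩

end IsUnilateralWeightedShift

end WeightedShift

theorem ZeroAtInftyContinuousMap.norm_apply_le {α β : Type*} [TopologicalSpace α]
    [NormedAddCommGroup β] (g : ZeroAtInftyContinuousMap α β) (x : α) : ‖g x‖ ≤ ‖g‖ := by
  rw [← ZeroAtInftyContinuousMap.norm_toBCF_eq_norm]
  exact g.toBCF.norm_coe_le_norm x

theorem ZeroAtInftyContinuousMap.norm_le_of_forall {α β : Type*} [TopologicalSpace α]
    [NormedAddCommGroup β] {g : ZeroAtInftyContinuousMap α β} {C : ℝ} (hC : 0 ≤ C)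
    (h : ∀ x, ‖g x‖ ≤ C) : ‖g‖ ≤ C := by
  rw [← ZeroAtInftyContinuousMap.norm_toBCF_eq_norm]
  exact (BoundedContinuousFunction.norm_le hC).2 h

noncomputable def ZeroAtInftyContinuousMap.evalCLM {α : Type*} [TopologicalSpace α] (x : α) :
    ZeroAtInftyContinuousMap α ℂ →L[ℂ] ℂ :=
  LinearMap.mkContinuous
    { toFun := fun g => g x
      map_add' := fun _ _ => rfl
      map_smul' := fun _ _ => rfl }
    1 fun g => by simpa using g.norm_apply_le x

theorem ZeroAtInftyContinuousMap.evalCLM_apply {α : Type*} [TopologicalSpace α] (x : α)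
    (g : ZeroAtInftyContinuousMap α ℂ) : evalCLM x g = g x := rfl

section DiscreteIndex

variable {α : Type*} [TopologicalSpace α] [DiscreteTopology α] [DecidableEq α]

theorem ZeroAtInftyContinuousMap.evalCLM_c0Single (x y : α) :
    evalCLM x (c0Single y) = if x = y then 1 else 0 := rfl

theorem norm_c0Single_le (x : α) : ‖(c0Single x : ZeroAtInftyContinuousMap α ℂ)‖ ≤ 1 :=
  ZeroAtInftyContinuousMap.norm_le_of_forall zero_le_one fun y => by
    rw [← ZeroAtInftyContinuousMap.evalCLM_apply, ZeroAtInftyContinuousMap.evalCLM_c0Single]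
    split_ifs <;> simp

theorem dense_span_c0Single :
    Dense (Submodule.span ℂ (Set.range (c0Single : α → ZeroAtInftyContinuousMap α ℂ)) :
      Set (ZeroAtInftyContinuousMap α ℂ)) := by
  refine Metric.dense_iff.2 fun g ε hε => ?_
  have hfin : {x | ε / 2 ≤ ‖g x‖}.Finite := by
    have hg := g.zero_at_infty'
    rw [cocompact_eq_cofinite] at hg
    simpa using Filter.eventually_cofinite.1
      ((tendsto_zero_iff_norm_tendsto_zero.1 hg).eventually (gt_mem_nhds (half_pos hε)))
  refine ⟨∑ x ∈ hfin.toFinset, g x • c0Single x, ?_,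
    Submodule.sum_mem _ fun x _ => Submodule.smul_mem _ _ (Submodule.subset_span ⟨x, rfl⟩)⟩
  rw [Metric.mem_ball, dist_comm, dist_eq_norm]
  refine (ZeroAtInftyContinuousMap.norm_le_of_forall (half_pos hε).le fun y => ?_).trans_lt
    (half_lt_self hε)
  rw [← ZeroAtInftyContinuousMap.evalCLM_apply, map_sub, map_sum,
    ZeroAtInftyContinuousMap.evalCLM_apply]
  simp only [map_smul, ZeroAtInftyContinuousMap.evalCLM_c0Single, smul_eq_mul, mul_ite, mul_one,
    mul_zero, sum_ite_eq]
  split_ifs with hy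
  · simpa using (half_pos hε).le
  · exact (lt_of_not_ge (by simpa using hy)).le

end DiscreteIndex

section LpSingle

variable {α 𝕜 : Type*} [NormedField 𝕜] [DecidableEq α] (p : ℝ≥0∞) [Fact (1 ≤ p)]

theorem lp.evalCLM_single_one (x y : α) :
    lp.evalCLM 𝕜 (fun _ : α => 𝕜) p x (lp.single p y 1) = if x = y then 1 else 0 := by
  change (lp.single p y (1 : 𝕜) : α → 𝕜) x = _
  rw [lp.single_apply, Pi.single_apply]

theorem lp.dense_span_single_one (hp : p ≠ ∞) :
    Dense (Submodule.span 𝕜 (Set.range fun x : α => lp.single p x (1 : 𝕜)) :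
      Set (lp (fun _ : α => 𝕜) p)) := by
  intro f
  refine mem_closure_of_tendsto (lp.hasSum_single hp f) (Eventually.of_forall fun s => ?_)
  refine Submodule.sum_mem _ fun x _ => ?_
  have hsmul : lp.single p x (f x) = f x • (lp.single p x 1 : lp (fun _ : α => 𝕜) p) := by
    rw [← lp.single_smul, smul_eq_mul, mul_one]
  rw [hsmul]
  exact Submodule.smul_mem _ _ (Submodule.subset_span ⟨x, rfl⟩)

end LpSingle

theorem stmt6 :
    (∀ w : ℕ → ℂ, (∀ n, w n ≠ 0) → BddWeight w →
      ∀ B : ZeroAtInftyContinuousMap ℕ ℂ →L[ℂ] ZeroAtInftyContinuousMap ℕ ℂ,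
        IsUnilateralWeightedShift c0Single w B →
        (TopMultiplyRecurrent B ↔
          ∀ M > (0 : ℝ), ∃ m₀ : ℕ, ∀ m > m₀, ∃ n : ℕ, 0 < n ∧
            ∀ l : ℕ, 1 ≤ l → l ≤ m → M < ∏ i ∈ Finset.Icc 1 (l * n), ‖w i‖)) ∧
    ∀ (p : ℝ≥0∞) [Fact (1 ≤ p)], p ≠ ∞ →
      ∀ w : ℕ → ℂ, (∀ n, w n ≠ 0) → BddWeight w →
      ∀ B : lp (fun _ : ℕ => ℂ) p →L[ℂ] lp (fun _ : ℕ => ℂ) p,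
        IsUnilateralWeightedShift (fun n => lp.single p n 1) w B →
        (TopMultiplyRecurrent B ↔
          ∀ M > (0 : ℝ), ∃ m₀ : ℕ, ∀ m > m₀, ∃ n : ℕ, 0 < n ∧
            ∀ l : ℕ, 1 ≤ l → l ≤ m → M < ∏ i ∈ Finset.Icc 1 (l * n), ‖w i‖) := by
  refine ⟨fun w hw hwb B hB => ?_, fun p _ hp w hw hwb B hB => ?_⟩
  · exact hB.topMultiplyRecurrent_iff norm_c0Single_le ZeroAtInftyContinuousMap.evalCLM_c0Single
      (fun n g => g.norm_apply_le n) dense_span_c0Single hw hwb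
  · have hp0 : p ≠ 0 := (zero_lt_one.trans_le Fact.out).ne'
    exact hB.topMultiplyRecurrent_iff
      (fun n => (lp.norm_single hp0.bot_lt n 1).trans_le norm_one.le)
      (lp.evalCLM_single_one p) (fun n x => lp.norm_apply_le_norm hp0 x n)
      (lp.dense_span_single_one p hp) hw hwb
end

section
/- Let X be a complex infinite-dimensional separable Banach space and T a hypercyclic bounded linear operator on X satisfying property P_{BD̄}. Then T is a syndetic operator, i.e., N(U,V) = {n ∈ ℕ : T^n(U) ∩ V ≠ ∅} is a syndetic subset of ℕ for all nonempty open sets U, V ⊆ X. -/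
open Filter Topology
open scoped ENNReal

open scoped Classical in
theorem blockCount_eq_filter (A : Set ℕ) (k s : ℕ) :
    blockCount A k s = ((Finset.Icc (k+1) (k+s)).filter (fun n => n ∈ A)).card := by
  have hset : (A ∩ Set.Icc (k+1) (k+s) : Set ℕ)
      = (((Finset.Icc (k+1) (k+s)).filter (fun n => n ∈ A) : Finset ℕ) : Set ℕ) := by
    ext n
    simp only [Set.mem_inter_iff, Set.mem_Icc, Finset.coe_filter, Finset.mem_Icc,
      Set.mem_setOf_eq]
    tauto
  rw [blockCount, hset, Nat.card_coe_set_eq, Set.ncard_coe_finset]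

theorem syndetic_diffset {A : Set ℕ} (hd : 0 < upperBanachDensity A) :
    Syndetic {t : ℕ | ∃ a, a ∈ A ∧ a + t ∈ A} := by
  classical
  set D : Set ℕ := {t : ℕ | ∃ a, a ∈ A ∧ a + t ∈ A} with hD
  by_contra hns
  rw [Syndetic] at hns
  push_neg at hns
  choose G hG using fun m : ℕ => hns (m+1) (Nat.succ_pos m)
  set b : ℕ → ℕ := fun m => Nat.rec 1 (fun _ prev => G prev + 1 + prev) m with hbdef
  have hbsucc : ∀ m, b (m+1) = G (b m) + 1 + b m := fun m => rfl
  have hb1 : ∀ m, 1 ≤ b m := by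
    intro m
    induction m with
    | zero => exact le_refl 1
    | succ n ih => rw [hbsucc]; omega
  have hbmono : Monotone b := monotone_nat_of_le_succ fun n => by rw [hbsucc]; omega
  have hbstrict : StrictMono b := strictMono_nat_of_lt_succ fun n => by rw [hbsucc]; omega
  have hkey : ∀ i j, i < j → b j - b i ∉ D := by
    intro i j hij
    obtain ⟨m, hm, him⟩ : ∃ m, j = m + 1 ∧ i ≤ m := ⟨j - 1, by omega, by omega⟩
    subst hm
    have hbi : b i ≤ b m := hbmono him
    have hbi1 : 1 ≤ b i := hb1 i
    have heq : b (m+1) - b i = G (b m) + (1 + b m - b i) := by rw [hbsucc]; omega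
    rw [heq]
    exact hG (b m) (1 + b m - b i) (by omega) (by omega)
  -- density facts
  set L : ℕ → ℝ := fun s => limsup (fun k => (blockCount A k s : ℝ)) atTop with hL
  have hbc_le : ∀ s k, (blockCount A k s : ℝ) ≤ s := by
    intro s k
    have h : blockCount A k s ≤ s := by
      rw [blockCount_eq_filter]
      calc ((Finset.Icc (k+1) (k+s)).filter (fun n => n ∈ A)).card
          ≤ (Finset.Icc (k+1) (k+s)).card := Finset.card_filter_le _ _
        _ = s := by rw [Nat.card_Icc]; omega
    exact_mod_cast h
  have hbdd : ∀ s, IsBoundedUnder (· ≤ ·) atTop (fun k => (blockCount A k s : ℝ)) :=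
    fun s => isBoundedUnder_of ⟨(s : ℝ), fun k => hbc_le s k⟩
  have hcob : ∀ s, IsCoboundedUnder (· ≤ ·) atTop (fun k => (blockCount A k s : ℝ)) := by
    intro s
    have hb : IsBoundedUnder (· ≥ ·) atTop (fun k => (blockCount A k s : ℝ)) :=
      isBoundedUnder_of ⟨(0 : ℝ), fun k => by positivity⟩
    exact hb.isCoboundedUnder_le
  have hLnn : ∀ s, 0 ≤ L s := fun s =>
    le_limsup_of_frequently_le (Frequently.of_forall fun k => by positivity) (hbdd s)
  have hcob2 : IsCoboundedUnder (· ≤ ·) atTop (fun s : ℕ => L s / s) := by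
    have hb : IsBoundedUnder (· ≥ ·) atTop (fun s : ℕ => L s / s) :=
      isBoundedUnder_of ⟨(0:ℝ), fun s => div_nonneg (hLnn s) (by positivity)⟩
    exact hb.isCoboundedUnder_le
  set d := upperBanachDensity A with hdd
  have hdeq : d = limsup (fun s : ℕ => L s / s) atTop := rfl
  have hfreq : ∃ᶠ s : ℕ in atTop, d / 2 < L s / s :=
    frequently_lt_of_lt_limsup hcob2 (by rw [← hdeq]; linarith)
  set K := ⌈4 / d⌉₊ + 1 with hK
  have hK4 : 4 / d ≤ (K : ℝ) := by
    have h1 : 4 / d ≤ (⌈4/d⌉₊ : ℝ) := Nat.le_ceil _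
    have h2 : ((⌈4/d⌉₊ : ℕ) : ℝ) ≤ (K : ℝ) := by exact_mod_cast Nat.le_succ _
    linarith
  have hKpos : 0 < K := Nat.succ_pos _
  set M := b (K - 1) + 1 with hM
  obtain ⟨s₀, hs₀d, hs₀M⟩ := (hfreq.and_eventually (eventually_ge_atTop M)).exists
  have hs₀pos : 0 < s₀ := by omega
  have hs₀R : (0:ℝ) < s₀ := by exact_mod_cast hs₀pos
  have hLs₀ : d / 2 * s₀ < L s₀ := (lt_div_iff₀ hs₀R).1 hs₀d
  obtain ⟨k, hk⟩ := (frequently_lt_of_lt_limsup (hcob s₀) hLs₀).exists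
  set F := (Finset.Icc (k+1) (k+s₀)).filter (fun n => n ∈ A) with hF
  have hFcard : d / 2 * s₀ < (F.card : ℝ) := by
    have h : (F.card : ℝ) = (blockCount A k s₀ : ℝ) := by rw [blockCount_eq_filter]
    linarith [hk]
  have hdisj : ∀ i ∈ Finset.range K, ∀ j ∈ Finset.range K, i ≠ j →
      Disjoint (F.image (· + b i)) (F.image (· + b j)) := by
    have key : ∀ i j, i < j → Disjoint (F.image (· + b i)) (F.image (· + b j)) := by
      intro i j hij
      rw [Finset.disjoint_left]
      rintro x hxi hxj
      obtain ⟨a, haF, ha⟩ := Finset.mem_image.1 hxi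
      obtain ⟨a', ha'F, ha'⟩ := Finset.mem_image.1 hxj
      have haA : a ∈ A := (Finset.mem_filter.1 haF).2
      have ha'A : a' ∈ A := (Finset.mem_filter.1 ha'F).2
      have hbij : b i < b j := hbstrict hij
      refine hkey i j hij ⟨a', ha'A, ?_⟩
      have heq : a' + (b j - b i) = a := by omega
      rw [heq]; exact haA
    intro i _ j _ hij
    rcases hij.lt_or_gt with h | h
    · exact key i j h
    · exact (key j i h).symm
  have hcardE : ((Finset.range K).biUnion fun i => F.image (· + b i)).card = K * F.card := by
    rw [Finset.card_biUnion hdisj]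
    have him : ∀ i, (F.image (· + b i)).card = F.card := fun i =>
      Finset.card_image_of_injective _ (add_left_injective (b i))
    simp [him, Finset.sum_const, Finset.card_range, Nat.mul_comm]
  have hsub : ((Finset.range K).biUnion fun i => F.image (· + b i)) ⊆
      Finset.Icc (k+2) (k + s₀ + b (K-1)) := by
    intro x hx
    obtain ⟨i, hi, hxi⟩ := Finset.mem_biUnion.1 hx
    have hiK : i < K := Finset.mem_range.1 hi
    obtain ⟨a, haF, rfl⟩ := Finset.mem_image.1 hxi
    have ha := Finset.mem_Icc.1 (Finset.mem_filter.1 haF).1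
    have h1 : 1 ≤ b i := hb1 i
    have h2 : b i ≤ b (K-1) := hbmono (by omega : i ≤ K - 1)
    rw [Finset.mem_Icc]
    omega
  have hNat : K * F.card ≤ s₀ + b (K-1) - 1 := by
    calc K * F.card = ((Finset.range K).biUnion fun i => F.image (· + b i)).card := hcardE.symm
      _ ≤ (Finset.Icc (k+2) (k + s₀ + b (K-1))).card := Finset.card_le_card hsub
      _ = s₀ + b (K-1) - 1 := by rw [Nat.card_Icc]; omega
  have hbK : b (K-1) + 1 ≤ s₀ := hs₀M
  have hNat2 : K * F.card + 2 ≤ 2 * s₀ := by omega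
  have hreal : (K : ℝ) * F.card + 2 ≤ 2 * s₀ := by exact_mod_cast hNat2
  have h1 : (2:ℝ) * s₀ ≤ K * (d/2 * s₀) := by
    have e : (4/d) * (d/2 * s₀) = 2 * s₀ := by field_simp; ring
    have h := mul_le_mul_of_nonneg_right hK4 (by positivity : (0:ℝ) ≤ d/2 * s₀)
    linarith
  have h2 : (K:ℝ) * (d/2 * s₀) < K * F.card := by
    apply mul_lt_mul_of_pos_left hFcard
    exact_mod_cast hKpos
  linarith

theorem stmt13' {X : Type*} [NormedAddCommGroup X] [NormedSpace ℂ X]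
    (_hdim : ¬ FiniteDimensional ℂ X) (T : X →L[ℂ] X)
    (_hhc : ∃ x : X, Dense (Set.range fun n : ℕ => (T ^ n) x))
    (_hP : ∀ U : Set X, IsOpen U → U.Nonempty → ∃ x : X, upperBD {n | (T ^ n) x ∈ U}) :
    ∀ U V : Set X, IsOpen U → IsOpen V → U.Nonempty → V.Nonempty →
      Syndetic {n : ℕ | ∃ x ∈ U, (T ^ n) x ∈ V} := by
  intro U V hU hV hUne hVne
  have hnt : Nontrivial X := by
    by_contra hn
    rw [not_nontrivial_iff_subsingleton] at hn
    exact _hdim inferInstance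
  haveI := hnt
  haveI : ∀ y : X, (nhdsWithin y {y}ᶜ).NeBot := fun y => Module.punctured_nhds_neBot ℂ X y
  obtain ⟨x, hx⟩ := _hhc
  obtain ⟨y₁, hy₁r, hy₁U⟩ := hx.exists_mem_open hU hUne
  obtain ⟨n₁, rfl⟩ := hy₁r
  have hdense2 : Dense ((Set.range fun n : ℕ => (T ^ n) x)
      \ ((fun i : ℕ => (T ^ i) x) '' Set.Iio n₁)) :=
    hx.diff_finite ((Set.finite_Iio n₁).image _)
  obtain ⟨y₂, hy₂, hy₂V⟩ := hdense2.exists_mem_open hV hVne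
  obtain ⟨⟨n₂, hn₂⟩, hy₂ni⟩ := hy₂
  have hn₁₂ : n₁ ≤ n₂ := by
    by_contra h
    exact hy₂ni ⟨n₂, Set.mem_Iio.mpr (Nat.lt_of_not_le h), hn₂⟩
  set m := n₂ - n₁ with hm
  set W := U ∩ (fun z => (T ^ m) z) ⁻¹' V with hW
  have hWo : IsOpen W := hU.inter (hV.preimage (T ^ m).continuous)
  have hWne : W.Nonempty := by
    refine ⟨(T ^ n₁) x, hy₁U, ?_⟩
    show (T ^ m) ((T ^ n₁) x) ∈ V
    have heq : (T ^ m) ((T ^ n₁) x) = (T ^ n₂) x := by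
      rw [← ContinuousLinearMap.mul_apply, ← pow_add]
      have : m + n₁ = n₂ := by omega
      rw [this]
    have hn₂' : (T ^ n₂) x = y₂ := hn₂
    rw [heq, hn₂']
    exact hy₂V
  obtain ⟨x₀, hx₀⟩ := _hP W hWo hWne
  have hd : 0 < upperBanachDensity {n : ℕ | (T ^ n) x₀ ∈ W} := hx₀
  obtain ⟨K, hKpos, hKsyn⟩ := syndetic_diffset hd
  refine ⟨K + m, by omega, fun n => ?_⟩
  obtain ⟨i, hi1, hiK, hiD⟩ := hKsyn n
  obtain ⟨a, haA, haiA⟩ := hiD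
  refine ⟨i + m, by omega, by omega, ?_⟩
  refine ⟨(T ^ a) x₀, haA.1, ?_⟩
  show (T ^ (n + (i + m))) ((T ^ a) x₀) ∈ V
  have heq : (T ^ (n + (i + m))) ((T ^ a) x₀) = (T ^ m) ((T ^ (a + (n + i))) x₀) := by
    rw [← ContinuousLinearMap.mul_apply, ← ContinuousLinearMap.mul_apply,
      ← pow_add, ← pow_add]
    have : n + (i + m) + a = m + (a + (n + i)) := by omega
    rw [this]
  rw [heq]
  exact haiA.2

theorem stmt13 {X : Type*} [NormedAddCommGroup X] [NormedSpace ℂ X] [CompleteSpace X]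
    [TopologicalSpace.SeparableSpace X] (_hdim : ¬ FiniteDimensional ℂ X) (T : X →L[ℂ] X) (_hhc : Hypercyclic T)
    (_hP : SatisfiesP (fun n x => (T ^ n) x) upperBD) :
    ∀ U V : Set X, IsOpen U → IsOpen V → U.Nonempty → V.Nonempty →
      Syndetic {n : ℕ | ∃ x ∈ U, (T ^ n) x ∈ V} :=
  stmt13' _hdim T _hhc (fun U hU hne => _hP U hU hne)
end

section
/- Let 1 ≤ p < ∞ and let B_w be a unilateral weighted backward shift on ℓ^p(ℤ₊) with |w_n| ≥ 1 for all n ≥ 1. If there exists x ∈ ℓ^p(ℤ₊) such that the set {n ∈ ℕ : ‖B_w^n x − e_0‖_p < 1/2} has positive upper Banach density, then there exists m ≥ 1 such that limsup_{l→∞} l / ∏_{ν=1}^{lm} |w_ν|^p < ∞. -/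
open Filter Topology
open scoped ENNReal

/-!
If `B ^ n x` is within `1 / 2` of `e₀`, its `0`-th coordinate `w₁ ⋯ w_n x_n` exceeds `1 / 2`.
Hence if both `B ^ n x` and `B ^ (n + j) x` are close to `e₀`, the `j`-th coordinate of `B ^ n x`
is at least `1 / (2 w₁ ⋯ w_j) ≥ 1 / (2 w₁ ⋯ w_l)` for `1 ≤ j ≤ l`, because `|w_ν| ≥ 1`. As
`‖B ^ n x - e₀‖_p < 1 / 2`, fewer than `(w₁ ⋯ w_l) ^ p` such `j ≤ l` exist. On the other hand, if
the return set has upper Banach density `δ > 0`, Fekete's lemma yields for every `l` a window of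
length `l` containing more than `δ l - 1` return times; taking `n` to be the first of them gives
`δ l - 2 < (w₁ ⋯ w_l) ^ p`, so `m = 1` works.
-/

lemma blockCount_le (A : Set ℕ) (k s : ℕ) : blockCount A k s ≤ s := by
  rw [blockCount, Nat.card_coe_set_eq]
  calc (A ∩ Set.Icc (k + 1) (k + s)).ncard ≤ (Set.Icc (k + 1) (k + s)).ncard :=
        Set.ncard_le_ncard Set.inter_subset_right (Set.finite_Icc _ _)
    _ = s := by rw [Set.ncard_Icc_nat]; omega

lemma blockCount_add (A : Set ℕ) (k s t : ℕ) :
    blockCount A k (s + t) = blockCount A k s + blockCount A (k + s) t := by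
  simp only [blockCount, Nat.card_coe_set_eq]
  rw [← Set.ncard_union_eq, ← Set.inter_union_distrib_left]
  · congr 2
    ext a
    simp only [Set.mem_union, Set.mem_Icc]
    omega
  · refine Set.disjoint_left.2 fun a ha hb => ?_
    simp only [Set.mem_inter_iff, Set.mem_Icc] at ha hb
    omega

lemma isBoundedUnder_le_blockCount (A : Set ℕ) (s : ℕ) {c : ℕ → ℕ} :
    IsBoundedUnder (· ≤ ·) atTop fun k => (blockCount A (c k) s : ℝ) :=
  isBoundedUnder_of ⟨s, fun k => by exact_mod_cast blockCount_le A (c k) s⟩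

lemma isBoundedUnder_ge_blockCount (A : Set ℕ) (s : ℕ) {c : ℕ → ℕ} :
    IsBoundedUnder (· ≥ ·) atTop fun k => (blockCount A (c k) s : ℝ) :=
  isBoundedUnder_of ⟨0, fun _ => Nat.cast_nonneg _⟩

lemma subadditive_limsup_blockCount (A : Set ℕ) :
    Subadditive fun s => limsup (fun k => (blockCount A k s : ℝ)) atTop := by
  intro s t
  simp only [blockCount_add, Nat.cast_add]
  calc limsup (fun k => (blockCount A k s : ℝ) + blockCount A (k + s) t) atTop
      ≤ limsup (fun k => (blockCount A k s : ℝ)) atTop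
          + limsup (fun k => (blockCount A (k + s) t : ℝ)) atTop :=
        limsup_add_le (isBoundedUnder_ge_blockCount A s) (isBoundedUnder_le_blockCount A s)
          (isBoundedUnder_ge_blockCount A t).isCoboundedUnder_le
          (isBoundedUnder_le_blockCount A t)
    _ = limsup (fun k => (blockCount A k s : ℝ)) atTop
          + limsup (fun k => (blockCount A k t : ℝ)) atTop := by
        rw [limsup_nat_add (fun k => (blockCount A k t : ℝ)) s]

/-- By Fekete's lemma the limsup defining the upper Banach density is a limit and an infimum. -/
lemma upperBanachDensity_mul_le_limsup_blockCount (A : Set ℕ) {s : ℕ} (hs : 0 < s) :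
    upperBanachDensity A * s ≤ limsup (fun k => (blockCount A k s : ℝ)) atTop := by
  have hsub := subadditive_limsup_blockCount A
  have hbdd :
      BddBelow (Set.range fun s : ℕ => limsup (fun k => (blockCount A k s : ℝ)) atTop / s) := by
    refine ⟨0, ?_⟩
    rintro _ ⟨t, rfl⟩
    exact div_nonneg (le_limsup_of_frequently_le (Frequently.of_forall fun _ => Nat.cast_nonneg _)
      (isBoundedUnder_le_blockCount A t)) t.cast_nonneg
  rw [upperBanachDensity, (hsub.tendsto_lim hbdd).limsup_eq, ← le_div_iff₀ (by positivity)]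
  exact hsub.lim_le_div hbdd hs.ne'

lemma exists_blockCount_gt (A : Set ℕ) {s : ℕ} (hs : 0 < s) :
    ∃ k, upperBanachDensity A * s - 1 < blockCount A k s := by
  by_contra! h
  have := limsup_le_of_le (isBoundedUnder_ge_blockCount A s).isCoboundedUnder_le
    (Eventually.of_forall h)
  linarith [upperBanachDensity_mul_le_limsup_blockCount A hs]

open Finset in
/-- The first element `n` of a block of `A` with many elements sees the rest of the block in
`n + {j ∈ [1, s] | n + j ∈ A}`. -/
lemma exists_mem_card_add_mem_gt (A : Set ℕ) [DecidablePred (· ∈ A)] {s : ℕ}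
    (h : 1 < upperBanachDensity A * s) :
    ∃ n ∈ A, upperBanachDensity A * s - 2 < #{j ∈ Icc 1 s | n + j ∈ A} := by
  have hs : 0 < s := Nat.pos_of_ne_zero fun hs => by simp [hs] at h; linarith
  obtain ⟨k, hk⟩ := exists_blockCount_gt A hs
  set F := A ∩ Set.Icc (k + 1) (k + s)
  have hF : F.Nonempty := by
    refine Set.nonempty_of_ncard_ne_zero fun h0 => ?_
    rw [blockCount, Nat.card_coe_set_eq, h0, Nat.cast_zero] at hk
    linarith
  have hn : sInf F ∈ F := Nat.sInf_mem hF
  refine ⟨sInf F, hn.1, ?_⟩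
  have hcover : F ⊆ ↑(insert (sInf F) (image (sInf F + ·) {j ∈ Icc 1 s | sInf F + j ∈ A})) := by
    intro a ha
    have hle : sInf F ≤ a := Nat.sInf_le ha
    rcases hle.eq_or_lt with rfl | hlt
    · exact mem_insert_self _ _
    · refine mem_insert_of_mem (mem_image.2 ⟨a - sInf F, mem_filter.2 ⟨?_, ?_⟩, ?_⟩)
      · have := hn.2.1; have := ha.2.2; rw [mem_Icc]; omega
      · rw [Nat.add_sub_cancel' hlt.le]; exact ha.1
      · exact Nat.add_sub_cancel' hlt.le
  have hcount : blockCount A k s ≤ #{j ∈ Icc 1 s | sInf F + j ∈ A} + 1 := by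
    rw [blockCount, Nat.card_coe_set_eq]
    calc F.ncard ≤ #(insert (sInf F) (image (sInf F + ·) {j ∈ Icc 1 s | sInf F + j ∈ A})) := by
          rw [← Set.ncard_coe_finset]; exact Set.ncard_le_ncard hcover
      _ ≤ #(image (sInf F + ·) {j ∈ Icc 1 s | sInf F + j ∈ A}) + 1 := card_insert_le _ _
      _ ≤ #{j ∈ Icc 1 s | sInf F + j ∈ A} + 1 := Nat.add_le_add_right card_image_le 1
  have : (blockCount A k s : ℝ) ≤ #{j ∈ Icc 1 s | sInf F + j ∈ A} + 1 := by exact_mod_cast hcount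
  linarith

lemma one_le_prod_norm_Icc {w : ℕ → ℂ} (hw1 : ∀ n : ℕ, 1 ≤ n → 1 ≤ ‖w n‖) (n : ℕ) :
    1 ≤ ∏ ν ∈ Finset.Icc 1 n, ‖w ν‖ :=
  Finset.one_le_prod fun i hi => hw1 i (Finset.mem_Icc.1 hi).1

lemma monotone_prod_norm_Icc {w : ℕ → ℂ} (hw1 : ∀ n : ℕ, 1 ≤ n → 1 ≤ ‖w n‖) :
    Monotone fun n => ∏ ν ∈ Finset.Icc 1 n, ‖w ν‖ := fun _ _ hmn =>
  Finset.prod_le_prod_of_subset_of_one_le (Finset.Icc_subset_Icc_right hmn)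
    (fun _ _ => norm_nonneg _) fun i hi _ => hw1 i (Finset.mem_Icc.1 hi).1

lemma one_half_lt_norm_apply_zero {p : ℝ≥0∞} [Fact (1 ≤ p)] {z : lp (fun _ : ℕ => ℂ) p}
    (hz : ‖z - lp.single p 0 1‖ < 1 / 2) : 1 / 2 < ‖z 0‖ := by
  have h := lp.norm_apply_le_norm (zero_lt_one.trans_le Fact.out).ne' (z - lp.single p 0 1) 0
  rw [lp.coeFn_sub, Pi.sub_apply, lp.single_apply_self] at h
  linarith [norm_sub_norm_le (1 : ℂ) (z 0), norm_sub_rev (1 : ℂ) (z 0), norm_one (α := ℂ)]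

namespace IsUnilateralWeightedShift

variable {p : ℝ≥0∞} [Fact (1 ≤ p)] {w : ℕ → ℂ}
  {B : lp (fun _ : ℕ => ℂ) p →L[ℂ] lp (fun _ : ℕ => ℂ) p}

lemma apply_apply (hp : p ≠ ∞) (hB : IsUnilateralWeightedShift (fun n => lp.single p n 1) w B)
    (y : lp (fun _ : ℕ => ℂ) p) (j : ℕ) :
    B y j = w (j + 1) * y (j + 1) := by
  have key : (lp.evalCLM ℂ (fun _ => ℂ) p j).comp B
      = w (j + 1) • lp.evalCLM ℂ (fun _ => ℂ) p (j + 1) := by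
    refine lp.ext_continuousLinearMap hp fun i => ContinuousLinearMap.ext_ring ?_
    rcases i with _ | k
    · simp [lp.evalCLM, hB.1, lp.single_apply]
    · rcases eq_or_ne j k with rfl | hjk
      · simp [lp.evalCLM, hB.2, lp.single_apply]
      · simp [lp.evalCLM, hB.2 k, lp.single_apply, hjk]
  exact DFunLike.congr_fun key y

lemma pow_apply_apply (hp : p ≠ ∞)
    (hB : IsUnilateralWeightedShift (fun n => lp.single p n 1) w B)
    (n : ℕ) (y : lp (fun _ : ℕ => ℂ) p) (j : ℕ) :
    (B ^ n) y j = (∏ ν ∈ Finset.Ioc j (j + n), w ν) * y (j + n) := by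
  induction n generalizing y with
  | zero => simp
  | succ n ih =>
    rw [pow_succ, mul_apply_eq_comp, ih, hB.apply_apply hp, ← add_assoc,
      Finset.prod_Ioc_succ_top (Nat.le_add_right j n), mul_assoc]

lemma norm_pow_apply_zero (hp : p ≠ ∞)
    (hB : IsUnilateralWeightedShift (fun n => lp.single p n 1) w B)
    (n : ℕ) (y : lp (fun _ : ℕ => ℂ) p) :
    ‖(B ^ n) y 0‖ = (∏ ν ∈ Finset.Icc 1 n, ‖w ν‖) * ‖y n‖ := by
  rw [hB.pow_apply_apply hp, norm_mul, norm_prod, zero_add, ← Finset.Icc_add_one_left_eq_Ioc,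
    zero_add]

open Finset in
lemma card_lt_prod_norm_rpow (hp : p ≠ ∞) (hw1 : ∀ n : ℕ, 1 ≤ n → 1 ≤ ‖w n‖)
    (hB : IsUnilateralWeightedShift (fun n => lp.single p n 1) w B)
    {x : lp (fun _ : ℕ => ℂ) p} {n l : ℕ} (hn : ‖(B ^ n) x - lp.single p 0 1‖ < 1 / 2)
    {J : Finset ℕ} (hJ : J ⊆ Icc 1 l)
    (hJA : ∀ j ∈ J, ‖(B ^ (n + j)) x - lp.single p 0 1‖ < 1 / 2) :
    (#J : ℝ) < (∏ ν ∈ Icc 1 l, ‖w ν‖) ^ p.toReal := by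
  set Q := ∏ ν ∈ Icc 1 l, ‖w ν‖
  set y := (B ^ n) x - lp.single p 0 1
  have hpr : 0 < p.toReal :=
    ENNReal.toReal_pos (zero_lt_one.trans_le Fact.out).ne' hp
  have hQ : 0 < Q := zero_lt_one.trans_le (one_le_prod_norm_Icc hw1 l)
  have hcoord : ∀ j ∈ J, 1 / 2 ≤ Q * ‖y j‖ := by
    intro j hj
    have hjl := mem_Icc.1 (hJ hj)
    have hyj : y j = (B ^ n) x j := by
      rw [lp.coeFn_sub, Pi.sub_apply, lp.single_apply_ne p 0 _ (by omega), sub_zero]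
    calc 1 / 2 ≤ ‖(B ^ (j + n)) x 0‖ :=
          (one_half_lt_norm_apply_zero (add_comm n j ▸ hJA j hj)).le
      _ = (∏ ν ∈ Icc 1 j, ‖w ν‖) * ‖y j‖ := by
        rw [pow_add, mul_apply_eq_comp, hB.norm_pow_apply_zero hp, hyj]
      _ ≤ Q * ‖y j‖ := by gcongr; exact monotone_prod_norm_Icc hw1 hjl.2
  have hlower : #J * (1 / 2 : ℝ) ^ p.toReal ≤ Q ^ p.toReal * ∑ j ∈ J, ‖y j‖ ^ p.toReal :=
    calc #J * (1 / 2 : ℝ) ^ p.toReal = ∑ _j ∈ J, (1 / 2 : ℝ) ^ p.toReal := by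
          rw [sum_const, nsmul_eq_mul]
      _ ≤ ∑ j ∈ J, (Q * ‖y j‖) ^ p.toReal :=
          sum_le_sum fun j hj => Real.rpow_le_rpow (by norm_num) (hcoord j hj) hpr.le
      _ = Q ^ p.toReal * ∑ j ∈ J, ‖y j‖ ^ p.toReal := by
          rw [mul_sum]
          exact sum_congr rfl fun j _ => Real.mul_rpow hQ.le (norm_nonneg _)
  have hupper : ∑ j ∈ J, ‖y j‖ ^ p.toReal < (1 / 2 : ℝ) ^ p.toReal :=
    (lp.sum_rpow_le_norm_rpow hpr y J).trans_lt (Real.rpow_lt_rpow (norm_nonneg _) hn hpr)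
  refine lt_of_mul_lt_mul_right ?_ (Real.rpow_nonneg (by norm_num : (0 : ℝ) ≤ 1 / 2) p.toReal)
  exact hlower.trans_lt (mul_lt_mul_of_pos_left hupper (Real.rpow_pos_of_pos hQ _))

end IsUnilateralWeightedShift

theorem stmt16_general (p : ℝ≥0∞) [Fact (1 ≤ p)] (_hp : p ≠ ∞)
    (w : ℕ → ℂ) (_hw1 : ∀ n : ℕ, 1 ≤ n → 1 ≤ ‖w n‖)
    (B : lp (fun _ : ℕ => ℂ) p →L[ℂ] lp (fun _ : ℕ => ℂ) p)
    (_hB : IsUnilateralWeightedShift (fun n => lp.single p n 1) w B)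
    (x : lp (fun _ : ℕ => ℂ) p)
    (_hx : 0 < upperBanachDensity {n : ℕ | ‖(B ^ n) x - lp.single p 0 1‖ < 1 / 2}) :
    ∃ m : ℕ, 1 ≤ m ∧
      Filter.limsup (fun l : ℕ => ENNReal.ofReal
        ((l : ℝ) / ∏ ν ∈ Finset.Icc 1 (l * m), ‖w ν‖ ^ p.toReal)) Filter.atTop < ⊤ := by
  classical
  set A := {n : ℕ | ‖(B ^ n) x - lp.single p 0 1‖ < 1 / 2}
  set δ := upperBanachDensity A
  have hbound : ∀ l : ℕ, 4 ≤ δ * l →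
      (l : ℝ) / ∏ ν ∈ Finset.Icc 1 (l * 1), ‖w ν‖ ^ p.toReal ≤ 2 / δ := by
    intro l hl
    obtain ⟨n, hn, hJ⟩ := exists_mem_card_add_mem_gt A (s := l) (by linarith)
    have hJ_lt := _hB.card_lt_prod_norm_rpow _hp _hw1 hn
      (Finset.filter_subset (fun j => n + j ∈ A) (Finset.Icc 1 l))
      fun j hj => (Finset.mem_filter.1 hj).2
    have hQ := Real.rpow_pos_of_pos (zero_lt_one.trans_le (one_le_prod_norm_Icc _hw1 l)) p.toReal
    rw [mul_one, Real.finsetProd_rpow _ _ fun _ _ => norm_nonneg _, div_le_div_iff₀ hQ _hx]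
    linarith
  refine ⟨1, le_rfl, (limsup_le_of_le (by isBoundedDefault) ?_).trans_lt
    (ENNReal.ofReal_lt_top (r := 2 / δ))⟩
  filter_upwards [eventually_ge_atTop ⌈4 / δ⌉₊] with l hl
  exact ENNReal.ofReal_le_ofReal (hbound l ((div_le_iff₀' _hx).1 (Nat.ceil_le.1 hl)))

theorem stmt16 (p : ℝ≥0∞) [Fact (1 ≤ p)] (_hp : p ≠ ∞)
    (w : ℕ → ℂ) (_hw1 : ∀ n : ℕ, 1 ≤ n → 1 ≤ ‖w n‖) (_hbdd : BddWeight w)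
    (B : lp (fun _ : ℕ => ℂ) p →L[ℂ] lp (fun _ : ℕ => ℂ) p)
    (_hB : IsUnilateralWeightedShift (fun n => lp.single p n 1) w B)
    (x : lp (fun _ : ℕ => ℂ) p)
    (_hx : 0 < upperBanachDensity {n : ℕ | ‖(B ^ n) x - lp.single p 0 1‖ < 1 / 2}) :
    ∃ m : ℕ, 1 ≤ m ∧
      Filter.limsup (fun l : ℕ => ENNReal.ofReal
        ((l : ℝ) / ∏ ν ∈ Finset.Icc 1 (l * m), ‖w ν‖ ^ p.toReal)) Filter.atTop < ⊤ :=
  stmt16_general p _hp w _hw1 B _hB x _hx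
end
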